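/- Let (U_k, V_k, E_k), k=1,…,p, be a proper weak regular multisplitting of a semimonotone matrix A ∈ ℝ^{m×n}, with H = Σ E_k U_k† V_k, and assume R(E_k) ⊆ R(Aᵀ) for each k. Then B := A(I - H)⁻¹ and C := B - A give the unique proper splitting A = B - C induced by H (i.e., with B†C = H), and this splitting is a convergent proper weak regular splitting: B† = (I-H)A† ≥ 0, B†C = H ≥ 0, and ρ(B†C) < 1. -/

import Mathlib

open Matrix Polynomial

/-- `X` is the Moore-Penrose inverse of `A`. -/
def IsMP {m n : ℕ} (A : Matrix (Fin m) (Fin n) ℝ) (X : Matrix (Fin n) (Fin m) ℝ) : Prop :=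
  A * X * A = A ∧ X * A * X = X ∧ (A * X)ᵀ = A * X ∧ (X * A)ᵀ = X * A

/-- `A = U - V` is a proper splitting: `R(U)=R(A)` and `N(U)=N(A)`. -/
def ProperSplitting {m n : ℕ} (A U V : Matrix (Fin m) (Fin n) ℝ) : Prop :=
  A = U - V ∧ LinearMap.range U.mulVecLin = LinearMap.range A.mulVecLin ∧
    LinearMap.ker U.mulVecLin = LinearMap.ker A.mulVecLin

/-- `μ : ℂ` is an eigenvalue of the real matrix `M`. -/
def IsEigen {n : ℕ} (M : Matrix (Fin n) (Fin n) ℝ) (μ : ℂ) : Prop :=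
  ((M.map (algebraMap ℝ ℂ)).charpoly).IsRoot μ

/-- The spectral radius of a real square matrix. -/
noncomputable def specRad {n : ℕ} (M : Matrix (Fin n) (Fin n) ℝ) : ℝ :=
  sSup {r : ℝ | ∃ μ : ℂ, IsEigen M μ ∧ r = ‖μ‖}

/-- Entrywise nonnegativity. -/
def EntryNonneg {m n : ℕ} (A : Matrix (Fin m) (Fin n) ℝ) : Prop := ∀ i j, 0 ≤ A i j

/-- Entrywise order. -/
def EntryLE {m n : ℕ} (A B : Matrix (Fin m) (Fin n) ℝ) : Prop := ∀ i j, A i j ≤ B i j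

/-- Entrywise strict order. -/
def EntryLT {m n : ℕ} (A B : Matrix (Fin m) (Fin n) ℝ) : Prop := ∀ i j, A i j < B i j

/-!
The hypotheses `∑ E_k = I` and `R(E_k) ⊆ R(Aᵀ)` force `A` to have full column rank, so `A†A = I`;
likewise `U_k†U_k = I` and `U_k U_k† = AA†`. Hence `I - H = WA` and `(I - H)A† = W` with
`W = ∑ E_k U_k† ≥ 0`. If `0 ≤ z ≤ zH`, multiplying `z(I - H) ≤ 0` by `A† ≥ 0` gives `zW = 0`,
so `zE_k = zE_kU_k†U_k = 0` for every `k` and `z = zI = 0`. Applied to `|v|` for a left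
eigenvector `v` of `H ≥ 0` with eigenvalue `|μ| ≥ 1`, this shows `ρ(H) < 1`; in particular
`I - H` is invertible, and `B = A(I - H)⁻¹` has Moore-Penrose inverse `(I - H)A†`.
-/

section EntryNonneg

variable {l m n : ℕ}

lemma EntryNonneg.mul {M : Matrix (Fin l) (Fin m) ℝ} {N : Matrix (Fin m) (Fin n) ℝ}
    (hM : EntryNonneg M) (hN : EntryNonneg N) : EntryNonneg (M * N) := fun i j => by
  rw [mul_apply]
  exact Finset.sum_nonneg fun k _ => mul_nonneg (hM i k) (hN k j)

lemma EntryNonneg.sum {p : ℕ} {M : Fin p → Matrix (Fin m) (Fin n) ℝ}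
    (hM : ∀ k, EntryNonneg (M k)) : EntryNonneg (∑ k, M k) := fun i j => by
  rw [Matrix.sum_apply]
  exact Finset.sum_nonneg fun k _ => hM k i j

lemma vecMul_nonneg {z : Fin m → ℝ} {M : Matrix (Fin m) (Fin n) ℝ} (hz : 0 ≤ z)
    (hM : EntryNonneg M) : 0 ≤ z ᵥ* M := fun j => by
  rw [Pi.zero_apply, vecMul, dotProduct]
  exact Finset.sum_nonneg fun i _ => mul_nonneg (hz i) (hM i j)

end EntryNonneg

section MoorePenrose

variable {l m n : ℕ} {A : Matrix (Fin m) (Fin n) ℝ} {X : Matrix (Fin n) (Fin m) ℝ}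

lemma IsMP.transpose (h : IsMP A X) : IsMP Aᵀ Xᵀ := by
  obtain ⟨h1, h2, h3, h4⟩ := h
  refine ⟨?_, ?_, ?_, ?_⟩
  · rw [← transpose_mul, ← transpose_mul, ← Matrix.mul_assoc, h1]
  · rw [← transpose_mul, ← transpose_mul, ← Matrix.mul_assoc, h2]
  · rw [← transpose_mul, transpose_transpose, h4]
  · rw [← transpose_mul, transpose_transpose, h3]

lemma IsMP.mul_mul_eq_of_range_le (h : IsMP A X) {B : Matrix (Fin m) (Fin l) ℝ}
    (hB : LinearMap.range B.mulVecLin ≤ LinearMap.range A.mulVecLin) : A * X * B = B := by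
  refine ext_iff_mulVec.2 fun v => ?_
  obtain ⟨w, hw⟩ := hB ⟨v, rfl⟩
  rw [mulVecLin_apply, mulVecLin_apply] at hw
  rw [← mulVec_mulVec, ← hw, mulVec_mulVec, h.1]

lemma IsMP.pinv_mul_mul_eq_of_range_le (h : IsMP A X) {B : Matrix (Fin n) (Fin l) ℝ}
    (hB : LinearMap.range B.mulVecLin ≤ LinearMap.range Aᵀ.mulVecLin) : X * A * B = B := by
  have := h.transpose.mul_mul_eq_of_range_le hB
  rwa [← transpose_mul, h.2.2.2] at this

lemma IsMP.pinv_mul_eq_one_of_sum_eq_one (h : IsMP A X) {p : ℕ}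
    {E : Fin p → Matrix (Fin n) (Fin n) ℝ} (hE : ∑ k, E k = 1)
    (hrange : ∀ k, LinearMap.range (E k).mulVecLin ≤ LinearMap.range Aᵀ.mulVecLin) :
    X * A = 1 :=
  calc X * A = X * A * ∑ k, E k := by rw [hE, Matrix.mul_one]
    _ = 1 := by
      rw [Matrix.mul_sum, ← hE]
      exact Finset.sum_congr rfl fun k _ => h.pinv_mul_mul_eq_of_range_le (hrange k)

lemma ker_mulVecLin_eq_bot_of_mul_eq_one (h : X * A = 1) : LinearMap.ker A.mulVecLin = ⊥ :=
  LinearMap.ker_eq_bot'.2 fun v hv => by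
    rw [mulVecLin_apply] at hv
    rw [← one_mulVec v, ← h, ← mulVec_mulVec, hv, mulVec_zero]

lemma IsMP.pinv_mul_eq_one (h : IsMP A X) (hker : LinearMap.ker A.mulVecLin = ⊥) :
    X * A = 1 :=
  ext_iff_mulVec.2 fun v => by
    have hv : A *ᵥ ((X * A) *ᵥ v - v) = 0 := by
      rw [mulVec_sub, mulVec_mulVec, ← Matrix.mul_assoc, h.1, sub_self]
    rw [one_mulVec, ← sub_eq_zero]
    exact LinearMap.ker_eq_bot'.1 hker _ hv

lemma IsMP.mul_pinv_eq_of_range_eq (hA : IsMP A X) {B : Matrix (Fin m) (Fin n) ℝ}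
    {Y : Matrix (Fin n) (Fin m) ℝ} (hB : IsMP B Y)
    (h : LinearMap.range A.mulVecLin = LinearMap.range B.mulVecLin) : A * X = B * Y :=
  calc A * X = (A * X)ᵀ := hA.2.2.1.symm
    _ = (B * Y * (A * X))ᵀ := by rw [← Matrix.mul_assoc, hB.mul_mul_eq_of_range_le h.le]
    _ = A * X * (B * Y) := by rw [transpose_mul, hA.2.2.1, hB.2.2.1]
    _ = B * Y := by rw [← Matrix.mul_assoc, hA.mul_mul_eq_of_range_le h.ge]

end MoorePenrose

section ProperSplitting

variable {m n : ℕ} {A U V : Matrix (Fin m) (Fin n) ℝ} {Ad Ud : Matrix (Fin n) (Fin m) ℝ}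

lemma ProperSplitting.pinv_mul_eq_one (h : ProperSplitting A U V) (hU : IsMP U Ud)
    (hA : Ad * A = 1) : Ud * U = 1 :=
  hU.pinv_mul_eq_one (h.2.2.trans (ker_mulVecLin_eq_bot_of_mul_eq_one hA))

lemma ProperSplitting.mul_pinv_eq (h : ProperSplitting A U V) (hA : IsMP A Ad)
    (hU : IsMP U Ud) : U * Ud = A * Ad :=
  hU.mul_pinv_eq_of_range_eq hA h.2.1

lemma mul_pinv_mul_mul_inv_eq_one (hA : Ad * A = 1) {T : Matrix (Fin n) (Fin n) ℝ}
    (hT : IsUnit T.det) : T * Ad * (A * T⁻¹) = 1 := by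
  rw [Matrix.mul_assoc, ← Matrix.mul_assoc Ad, hA, Matrix.one_mul, mul_nonsing_inv _ hT]

lemma properSplitting_mul_inv (hA : Ad * A = 1) {T : Matrix (Fin n) (Fin n) ℝ}
    (hT : IsUnit T.det) : ProperSplitting A (A * T⁻¹) (A * T⁻¹ - A) := by
  refine ⟨(sub_sub_cancel _ _).symm, ?_, ?_⟩
  · rw [mulVecLin_mul, LinearMap.range_comp_of_range_eq_top]
    exact LinearMap.range_eq_top.2 fun x => ⟨T *ᵥ x, by
      rw [mulVecLin_apply, mulVec_mulVec, nonsing_inv_mul _ hT, one_mulVec]⟩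
  · rw [ker_mulVecLin_eq_bot_of_mul_eq_one (mul_pinv_mul_mul_inv_eq_one hA hT),
      ker_mulVecLin_eq_bot_of_mul_eq_one hA]

lemma IsMP.mul_inv (h : IsMP A Ad) (hA : Ad * A = 1) {T : Matrix (Fin n) (Fin n) ℝ}
    (hT : IsUnit T.det) : IsMP (A * T⁻¹) (T * Ad) := by
  have hinv := mul_pinv_mul_mul_inv_eq_one hA hT
  have hproj : A * T⁻¹ * (T * Ad) = A * Ad := by
    rw [← Matrix.mul_assoc, nonsing_inv_mul_cancel_right T A hT]
  exact ⟨by rw [Matrix.mul_assoc, hinv, Matrix.mul_one], by rw [hinv, Matrix.one_mul],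
    by rw [hproj, h.2.2.1], by rw [hinv, transpose_one]⟩

lemma ProperSplitting.eq_mul_inv {C : Matrix (Fin m) (Fin n) ℝ} (h : ProperSplitting A U C)
    (hU : IsMP U Ud) (hA : Ad * A = 1) {H : Matrix (Fin n) (Fin n) ℝ}
    (hH : IsUnit (1 - H).det) (hUC : Ud * C = H) : U = A * (1 - H)⁻¹ := by
  have hC : C = U - A := by rw [h.1, sub_sub_cancel]
  have hUdA : Ud * A = 1 - H := by
    rw [← hUC, hC, Matrix.mul_sub, h.pinv_mul_eq_one hU hA, sub_sub_cancel]
  have hUH : U * (1 - H) = A := by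
    rw [← hUdA, ← Matrix.mul_assoc]
    exact hU.mul_mul_eq_of_range_le h.2.1.ge
  rw [← hUH, mul_nonsing_inv_cancel_right _ _ hH]

end ProperSplitting

section Multisplitting

variable {m n p : ℕ} {A : Matrix (Fin m) (Fin n) ℝ} {Ad : Matrix (Fin n) (Fin m) ℝ}
  {U V : Fin p → Matrix (Fin m) (Fin n) ℝ} {Ud : Fin p → Matrix (Fin n) (Fin m) ℝ}
  {E : Fin p → Matrix (Fin n) (Fin n) ℝ}

lemma sum_mul_pinv_mul_eq_one_sub (hps : ∀ k, ProperSplitting A (U k) (V k))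
    (hUdU : ∀ k, Ud k * U k = 1) (hE : ∑ k, E k = 1) :
    ∑ k, E k * Ud k * V k = 1 - (∑ k, E k * Ud k) * A := by
  have hV k : V k = U k - A := by rw [(hps k).1, sub_sub_cancel]
  simp only [hV, Matrix.mul_sub, Matrix.mul_assoc, hUdU, Matrix.mul_one, Finset.sum_sub_distrib,
    hE, Matrix.sum_mul]

lemma one_sub_sum_mul_pinv_mul_mul_pinv (hA : IsMP A Ad)
    (hps : ∀ k, ProperSplitting A (U k) (V k)) (hU : ∀ k, IsMP (U k) (Ud k))
    (hUdU : ∀ k, Ud k * U k = 1) (hE : ∑ k, E k = 1) :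
    (1 - ∑ k, E k * Ud k * V k) * Ad = ∑ k, E k * Ud k := by
  rw [sum_mul_pinv_mul_eq_one_sub hps hUdU hE, sub_sub_cancel, Matrix.sum_mul, Matrix.sum_mul]
  refine Finset.sum_congr rfl fun k _ => ?_
  rw [Matrix.mul_assoc, Matrix.mul_assoc, ← (hps k).mul_pinv_eq hA (hU k),
    ← Matrix.mul_assoc (Ud k), (hU k).2.1]

lemma eq_zero_of_vecMul_sum_mul_pinv_eq_zero (hUdU : ∀ k, Ud k * U k = 1)
    (hE0 : ∀ k, EntryNonneg (E k)) (hUd : ∀ k, EntryNonneg (Ud k)) (hE : ∑ k, E k = 1)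
    {z : Fin n → ℝ} (hz : 0 ≤ z) (h : z ᵥ* ∑ k, E k * Ud k = 0) : z = 0 := by
  rw [vecMul_sum, Finset.sum_eq_zero_iff_of_nonneg
    fun k _ => vecMul_nonneg hz ((hE0 k).mul (hUd k))] at h
  calc z = ∑ k, z ᵥ* (E k * Ud k) ᵥ* U k := by
        simp only [vecMul_vecMul, Matrix.mul_assoc, hUdU, Matrix.mul_one, ← vecMul_sum, hE,
          vecMul_one]
    _ = 0 := by simp [h]

end Multisplitting

lemma vecMul_eq_zero_of_le_vecMul {m n : ℕ} {H : Matrix (Fin n) (Fin n) ℝ}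
    {Ad W : Matrix (Fin n) (Fin m) ℝ} (hAd : EntryNonneg Ad) (hW : EntryNonneg W)
    (hHW : (1 - H) * Ad = W) {z : Fin n → ℝ} (hz : 0 ≤ z) (hzH : z ≤ z ᵥ* H) :
    z ᵥ* W = 0 := by
  refine le_antisymm ?_ (vecMul_nonneg hz hW)
  have := vecMul_nonneg (sub_nonneg.2 hzH) hAd
  rwa [← neg_nonneg, ← hHW, ← vecMul_vecMul, vecMul_sub, vecMul_one, ← neg_vecMul, neg_sub]

section Spectrum

variable {n : ℕ} {M : Matrix (Fin n) (Fin n) ℝ} {μ : ℂ}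

lemma isEigen_iff_det_eq_zero :
    IsEigen M μ ↔ (scalar (Fin n) μ - M.map (algebraMap ℝ ℂ)).det = 0 := by
  rw [IsEigen, IsRoot.def, eval_charpoly]

lemma IsEigen.exists_vecMul_eq_smul (h : IsEigen M μ) :
    ∃ v ≠ 0, v ᵥ* M.map (algebraMap ℝ ℂ) = μ • v := by
  obtain ⟨v, hv0, hv⟩ := exists_vecMul_eq_zero_iff.2 (isEigen_iff_det_eq_zero.1 h)
  refine ⟨v, hv0, ?_⟩
  rw [vecMul_sub, sub_eq_zero] at hv
  rw [← hv]
  ext i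
  simp [mul_comm]

lemma isUnit_det_one_sub_of_forall_isEigen (h : ∀ μ, IsEigen M μ → ‖μ‖ < 1) :
    IsUnit (1 - M).det := by
  refine isUnit_iff_ne_zero.2 fun h0 => ?_
  have hmap : scalar (Fin n) (1 : ℂ) - M.map (algebraMap ℝ ℂ) =
      (algebraMap ℝ ℂ).mapMatrix (1 - M) := by
    rw [RingHom.mapMatrix_apply, Matrix.map_sub _ (map_sub _),
      Matrix.map_one _ (map_zero _) (map_one _), scalar_apply, diagonal_one]
  simpa using h 1 (isEigen_iff_det_eq_zero.2 (by rw [hmap, ← RingHom.map_det, h0, map_zero]))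

lemma norm_smul_le_vecMul_norm (hM : EntryNonneg M) {v : Fin n → ℂ}
    (hv : v ᵥ* M.map (algebraMap ℝ ℂ) = μ • v) :
    ‖μ‖ • (fun i => ‖v i‖) ≤ (fun i => ‖v i‖) ᵥ* M := fun j =>
  calc ‖μ‖ * ‖v j‖ = ‖∑ i, v i * M i j‖ := by
        rw [← norm_mul, ← smul_eq_mul, ← Pi.smul_apply, ← hv]; rfl
    _ ≤ ∑ i, ‖v i‖ * M i j := (norm_sum_le _ _).trans_eq (by simp [abs_of_nonneg (hM _ _)])

lemma norm_lt_one_of_isEigen (hM : EntryNonneg M)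
    (hdom : ∀ z : Fin n → ℝ, 0 ≤ z → z ≤ z ᵥ* M → z = 0) (hμ : IsEigen M μ) : ‖μ‖ < 1 := by
  obtain ⟨v, hv0, hv⟩ := hμ.exists_vecMul_eq_smul
  by_contra! h1
  have hle : (fun i => ‖v i‖) ≤ (fun i => ‖v i‖) ᵥ* M :=
    le_trans (fun j => le_mul_of_one_le_left (norm_nonneg _) h1) (norm_smul_le_vecMul_norm hM hv)
  exact hv0 (funext fun i => norm_eq_zero.1 (congrFun (hdom _ (fun i => norm_nonneg (v i)) hle) i))

lemma specRad_lt_of_forall_isEigen {r : ℝ} (hr : 0 < r) (h : ∀ μ, IsEigen M μ → ‖μ‖ < r) :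
    specRad M < r := by
  rcases {r : ℝ | ∃ μ : ℂ, IsEigen M μ ∧ r = ‖μ‖}.eq_empty_or_nonempty with hS | hS
  · rwa [specRad, hS, Real.sSup_empty]
  · have hfin : {r : ℝ | ∃ μ : ℂ, IsEigen M μ ∧ r = ‖μ‖}.Finite :=
      ((finite_setOfPred_isRoot (charpoly_monic _).ne_zero).image fun μ : ℂ => ‖μ‖).subset
        (by rintro _ ⟨μ, hμ, rfl⟩; exact ⟨μ, hμ, rfl⟩)
    rw [specRad, hfin.csSup_lt_iff hS]
    rintro _ ⟨μ, hμ, rfl⟩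
    exact h μ hμ

end Spectrum

theorem stmt15_general {m n p : ℕ} (A : Matrix (Fin m) (Fin n) ℝ)
    (U V : Fin p → Matrix (Fin m) (Fin n) ℝ) (Ud : Fin p → Matrix (Fin n) (Fin m) ℝ)
    (E : Fin p → Matrix (Fin n) (Fin n) ℝ)
    (Ad : Matrix (Fin n) (Fin m) ℝ) (hA : IsMP A Ad) (hsemi : EntryNonneg Ad)
    (hps : ∀ k, ProperSplitting A (U k) (V k)) (hU : ∀ k, IsMP (U k) (Ud k))
    (hE0 : ∀ k, EntryNonneg (E k))
    (hEsum : ∑ k, E k = 1)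
    (hUd : ∀ k, EntryNonneg (Ud k)) (hUdV : ∀ k, EntryNonneg (Ud k * V k))
    (hrange : ∀ k, LinearMap.range (E k).mulVecLin ≤ LinearMap.range (Aᵀ).mulVecLin)
    (H : Matrix (Fin n) (Fin n) ℝ) (hH : H = ∑ k, E k * Ud k * V k)
    (B : Matrix (Fin m) (Fin n) ℝ) (hB : B = A * (1 - H)⁻¹) :
    ProperSplitting A B (B - A) ∧
    IsMP B ((1 - H) * Ad) ∧ EntryNonneg ((1 - H) * Ad) ∧
    (1 - H) * Ad * (B - A) = H ∧ EntryNonneg H ∧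
    specRad ((1 - H) * Ad * (B - A)) < 1 ∧
    (∀ B' C' : Matrix (Fin m) (Fin n) ℝ, ∀ B'd : Matrix (Fin n) (Fin m) ℝ,
      ProperSplitting A B' C' → IsMP B' B'd → B'd * C' = H → B' = B) := by
  have hAdA : Ad * A = 1 := hA.pinv_mul_eq_one_of_sum_eq_one hEsum hrange
  have hUdU k : Ud k * U k = 1 := (hps k).pinv_mul_eq_one (hU k) hAdA
  have hW0 : EntryNonneg (∑ k, E k * Ud k) := .sum fun k => (hE0 k).mul (hUd k)
  have hH0 : EntryNonneg H := hH ▸ .sum fun k => by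
    rw [Matrix.mul_assoc]
    exact (hE0 k).mul (hUdV k)
  have hW : (1 - H) * Ad = ∑ k, E k * Ud k :=
    hH ▸ one_sub_sum_mul_pinv_mul_mul_pinv hA hps hU hUdU hEsum
  have heig : ∀ μ, IsEigen H μ → ‖μ‖ < 1 := fun μ => norm_lt_one_of_isEigen hH0 fun z hz hzH =>
    eq_zero_of_vecMul_sum_mul_pinv_eq_zero hUdU hE0 hUd hEsum hz
      (vecMul_eq_zero_of_le_vecMul hsemi hW0 hW hz hzH)
  have hT : IsUnit (1 - H).det := isUnit_det_one_sub_of_forall_isEigen heig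
  have hBdC : (1 - H) * Ad * (B - A) = H := by
    rw [Matrix.mul_sub, hB, mul_pinv_mul_mul_inv_eq_one hAdA hT, Matrix.mul_assoc, hAdA,
      Matrix.mul_one, sub_sub_cancel]
  subst hB
  exact ⟨properSplitting_mul_inv hAdA hT, hA.mul_inv hAdA hT, hW ▸ hW0, hBdC, hH0,
    by rw [hBdC]; exact specRad_lt_of_forall_isEigen one_pos heig,
    fun _ _ _ hsplit hMP hBC => hsplit.eq_mul_inv hMP hAdA hT hBC⟩

theorem stmt15 {m n p : ℕ} (A : Matrix (Fin m) (Fin n) ℝ)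
    (U V : Fin p → Matrix (Fin m) (Fin n) ℝ) (Ud : Fin p → Matrix (Fin n) (Fin m) ℝ)
    (E : Fin p → Matrix (Fin n) (Fin n) ℝ)
    (Ad : Matrix (Fin n) (Fin m) ℝ) (hA : IsMP A Ad) (hsemi : EntryNonneg Ad)
    (hps : ∀ k, ProperSplitting A (U k) (V k)) (hU : ∀ k, IsMP (U k) (Ud k))
    (hE0 : ∀ k, EntryNonneg (E k)) (hEdiag : ∀ k, ∀ i j, i ≠ j → E k i j = 0)
    (hEsum : ∑ k, E k = 1)
    (hUd : ∀ k, EntryNonneg (Ud k)) (hUdV : ∀ k, EntryNonneg (Ud k * V k))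
    (hrange : ∀ k, LinearMap.range (E k).mulVecLin ≤ LinearMap.range (Aᵀ).mulVecLin)
    (H : Matrix (Fin n) (Fin n) ℝ) (hH : H = ∑ k, E k * Ud k * V k)
    (B : Matrix (Fin m) (Fin n) ℝ) (hB : B = A * (1 - H)⁻¹) :
    ProperSplitting A B (B - A) ∧
    IsMP B ((1 - H) * Ad) ∧ EntryNonneg ((1 - H) * Ad) ∧
    (1 - H) * Ad * (B - A) = H ∧ EntryNonneg H ∧
    specRad ((1 - H) * Ad * (B - A)) < 1 ∧
    (∀ B' C' : Matrix (Fin m) (Fin n) ℝ, ∀ B'd : Matrix (Fin n) (Fin m) ℝ,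
      ProperSplitting A B' C' → IsMP B' B'd → B'd * C' = H → B' = B) :=
  stmt15_general A U V Ud E Ad hA hsemi hps hU hE0 hEsum hUd hUdV hrange H hH B hB
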